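/- Fix natural numbers k and M with M ≥ 1. For a finite set Γ of anti-Horn clauses, all with right-hand sides of size at most k, define w(Γ) = ∑_{γ ∈ Γ} (M+1)^{k-|rhs γ|}. Suppose |Γ| ≤ M, δ is a clause with |rhs δ| ≤ k and δ ∉ Γ, and every γ ∈ Γ with rhs δ ⊆ rhs γ satisfies rhs δ ⊊ rhs γ (δ itself is new). Then w((Γ \ {γ ∈ Γ : rhs δ ⊆ rhs γ}) ∪ {δ}) > w(Γ). -/

import Mathlib

abbrev Word := List Bool
abbrev Clause := Word × Finset Word

/-- Weight of a finite set of clauses, relative to parameters k and M. -/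
def weight (k M : ℕ) (Γ : Finset Clause) : ℕ :=
  ∑ γ ∈ Γ, (M + 1) ^ (k - γ.2.card)

/-!
Replacing the clauses γ with `rhs δ ⊆ rhs γ` by δ trades at most `M` clauses, each with a strictly
larger right-hand side and hence of weight at most `(M+1)^(k - |rhs δ| - 1)`, for one clause of
weight `(M+1)^(k - |rhs δ|)`; since `M * (M+1)^e < (M+1)^(e+1)`, the weight goes up.
-/

section

variable (k M : ℕ)

theorem weight_eq_weight_filter_not_add_weight_filter (Γ : Finset Clause) (p : Clause → Prop)
    [DecidablePred p] :
    weight k M Γ = weight k M (Γ.filter (fun γ => ¬ p γ)) + weight k M (Γ.filter p) := by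
  rw [add_comm]
  exact (Finset.sum_filter_add_sum_filter_not Γ p _).symm

theorem weight_union_singleton {Γ : Finset Clause} {δ : Clause} (hδ : δ ∉ Γ) :
    weight k M (Γ ∪ {δ}) = weight k M Γ + (M + 1) ^ (k - δ.2.card) := by
  rw [weight, Finset.sum_union (Finset.disjoint_singleton_right.mpr hδ), Finset.sum_singleton,
    weight]

theorem weight_lt_pow_of_card_lt {S : Finset Clause} {c : ℕ} (hSk : ∀ γ ∈ S, γ.2.card ≤ k)
    (hSc : ∀ γ ∈ S, c < γ.2.card) (hSM : S.card ≤ M) :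
    weight k M S < (M + 1) ^ (k - c) := by
  obtain rfl | ⟨γ₀, hγ₀⟩ := S.eq_empty_or_nonempty
  · simp [weight]
  obtain ⟨e, he⟩ : ∃ e, k - c = e + 1 :=
    Nat.exists_eq_add_one.mpr (Nat.sub_pos_of_lt ((hSc γ₀ hγ₀).trans_le (hSk γ₀ hγ₀)))
  have hterm : ∀ γ ∈ S, (M + 1) ^ (k - γ.2.card) ≤ (M + 1) ^ e := fun γ hγ =>
    Nat.pow_le_pow_right M.succ_pos (by have := hSc γ hγ; omega)
  calc weight k M S ≤ S.card • (M + 1) ^ e := Finset.sum_le_card_nsmul S _ _ hterm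
    _ ≤ M * (M + 1) ^ e := Nat.mul_le_mul_right _ hSM
    _ < (M + 1) * (M + 1) ^ e := Nat.mul_lt_mul_of_pos_right M.lt_succ_self (by positivity)
    _ = (M + 1) ^ (k - c) := by rw [he, pow_succ']

end

theorem weight_increases_general (k M : ℕ)
    (Γ : Finset Clause) (hΓk : ∀ γ ∈ Γ, γ.2.card ≤ k)
    (hΓM : Γ.card ≤ M)
    (δ : Clause)
    (hproper : ∀ γ ∈ Γ, δ.2 ⊆ γ.2 → δ.2 ⊂ γ.2) :
    weight k M Γ <
      weight k M ((Γ.filter (fun γ => ¬ δ.2 ⊆ γ.2)) ∪ {δ}) := by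
  have hδ : δ ∉ Γ.filter (fun γ => ¬ δ.2 ⊆ γ.2) := by simp
  rw [weight_eq_weight_filter_not_add_weight_filter k M Γ (fun γ => δ.2 ⊆ γ.2),
    weight_union_singleton k M hδ]
  refine Nat.add_lt_add_left (weight_lt_pow_of_card_lt k M ?_ ?_ ?_) _
  · exact fun γ hγ => hΓk γ (Finset.mem_of_mem_filter γ hγ)
  · intro γ hγ
    obtain ⟨hγΓ, hsub⟩ := Finset.mem_filter.mp hγ
    exact Finset.card_lt_card (hproper γ hγΓ hsub)
  · exact (Finset.card_filter_le _ _).trans hΓM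

theorem weight_increases (k M : ℕ) (hM : 1 ≤ M)
    (Γ : Finset Clause) (hΓk : ∀ γ ∈ Γ, γ.2.card ≤ k)
    (hΓM : Γ.card ≤ M)
    (δ : Clause) (hδk : δ.2.card ≤ k) (hδnew : δ ∉ Γ)
    (hproper : ∀ γ ∈ Γ, δ.2 ⊆ γ.2 → δ.2 ⊂ γ.2) :
    weight k M Γ <
      weight k M ((Γ.filter (fun γ => ¬ δ.2 ⊆ γ.2)) ∪ {δ}) :=
  weight_increases_general k M Γ hΓk hΓM δ hproper
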